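/- For all positive reals a, b: C(a,b) − R(a,b) ≤ (2/3)(S(a,b) − G(a,b)); equivalently 2G(a,b) + 3C(a,b) ≤ 2S(a,b) + 3R(a,b). -/

import Mathlib

noncomputable def meanA (a b : ℝ) : ℝ := (a + b) / 2
noncomputable def meanG (a b : ℝ) : ℝ := Real.sqrt (a * b)
noncomputable def meanH (a b : ℝ) : ℝ := 2 * a * b / (a + b)
noncomputable def meanN (a b : ℝ) : ℝ := (a + Real.sqrt (a * b) + b) / 3
noncomputable def meanC (a b : ℝ) : ℝ := (a ^ 2 + b ^ 2) / (a + b)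
noncomputable def meanS (a b : ℝ) : ℝ := Real.sqrt ((a ^ 2 + b ^ 2) / 2)
noncomputable def meanR (a b : ℝ) : ℝ := 2 * (a ^ 2 + a * b + b ^ 2) / (3 * (a + b))
noncomputable def triDelta (a b : ℝ) : ℝ := (a - b) ^ 2 / (a + b)
noncomputable def hellinger (a b : ℝ) : ℝ := (Real.sqrt a - Real.sqrt b) ^ 2 / 2

/-!
Both sides are multiples of `(a - b)²`: `C - R = (a - b)² / (3 (a + b))`, while
`S² - G² = (a - b)² / 2` gives `S - G = (a - b)² / (2 (S + G))`. The inequality therefore reduces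
to `S + G ≤ a + b`, which follows from `(S + G)² ≤ 2 (S² + G²) = (a + b)²`.
-/

theorem meanC_sub_meanR {a b : ℝ} (hab : a + b ≠ 0) :
    meanC a b - meanR a b = triDelta a b / 3 := by
  unfold meanC meanR triDelta
  field_simp
  ring

theorem meanS_sq (a b : ℝ) : meanS a b ^ 2 = (a ^ 2 + b ^ 2) / 2 :=
  Real.sq_sqrt (by positivity)

theorem meanG_sq {a b : ℝ} (hab : 0 ≤ a * b) : meanG a b ^ 2 = a * b :=
  Real.sq_sqrt hab

theorem meanG_le_meanS (a b : ℝ) : meanG a b ≤ meanS a b :=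
  Real.sqrt_le_sqrt (by nlinarith [sq_nonneg (a - b)])

theorem meanS_add_meanG_le {a b : ℝ} (ha : 0 ≤ a) (hb : 0 ≤ b) :
    meanS a b + meanG a b ≤ a + b := by
  have hS := meanS_sq a b
  have hG := meanG_sq (mul_nonneg ha hb)
  have hsq : (meanS a b + meanG a b) ^ 2 ≤ (a + b) ^ 2 := by
    nlinarith [sq_nonneg (meanS a b - meanG a b)]
  exact (pow_le_pow_iff_left₀ (add_nonneg (Real.sqrt_nonneg _) (Real.sqrt_nonneg _))
    (add_nonneg ha hb) two_ne_zero).1 hsq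

theorem sq_sub_le_two_mul_add_mul_meanS_sub_meanG {a b : ℝ} (ha : 0 ≤ a) (hb : 0 ≤ b) :
    (a - b) ^ 2 ≤ 2 * (a + b) * (meanS a b - meanG a b) := by
  have hdiff : (a - b) ^ 2 = 2 * (meanS a b + meanG a b) * (meanS a b - meanG a b) := by
    linear_combination 2 * meanG_sq (mul_nonneg ha hb) - 2 * meanS_sq a b
  rw [hdiff]
  have hSG : 0 ≤ meanS a b - meanG a b := sub_nonneg.2 (meanG_le_meanS a b)
  have hsum := meanS_add_meanG_le ha hb
  gcongr

theorem stmt_10 (a b : ℝ) (ha : 0 < a) (hb : 0 < b) :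
    meanC a b - meanR a b ≤ (2 / 3) * (meanS a b - meanG a b) := by
  have hab : 0 < a + b := add_pos ha hb
  rw [meanC_sub_meanR hab.ne', triDelta, div_div, div_le_iff₀ (by positivity)]
  linarith [sq_sub_le_two_mul_add_mul_meanS_sub_meanG ha.le hb.le]
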